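/- Under the hypotheses of the preceding situation (f ∈ BV(ℤ), [a_−,a_+] a local maximum of Mf with Mf ≠ |f| on [a_−,a_+], [b_−,b_+] a local minimum with b_+ < a_−, Mf monotone on [b_+, a_−], r = r_{a_+} a good radius at a_+), one has a_+ − r < b_+; that is, the good interval [a_+ − r, a_+ + r] extends strictly to the left of b_+. -/
import Mathlib


open MeasureTheory Filter Topology Set

/-- The centered discrete average of `|f|` at `n` with radius `r`. -/
noncomputable def Avg (f : ℤ → ℝ) (n : ℤ) (r : ℕ) : ℝ :=
  (2 * (r : ℝ) + 1)⁻¹ * ∑ k ∈ Finset.Icc (-(r : ℤ)) (r : ℤ), |f (n + k)|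

/-- The discrete centered Hardy–Littlewood maximal operator. -/
noncomputable def MD (f : ℤ → ℝ) (n : ℤ) : ℝ :=
  ⨆ r : ℕ, Avg f n r

/-- The total variation of a sequence `f : ℤ → ℝ`. -/
noncomputable def DVar (f : ℤ → ℝ) : ℝ :=
  ∑' n : ℤ, |f (n + 1) - f n|

/-- `f : ℤ → ℝ` has bounded variation (and a limit at `-∞`). -/
def DBV (f : ℤ → ℝ) : Prop :=
  Summable (fun n : ℤ => |f (n + 1) - f n|) ∧ ∃ L : ℝ, Tendsto f atBot (𝓝 L)

/-- `[x, y]` is a local maximum interval of `g`. -/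
def DLocalMax (g : ℤ → ℝ) (x y : ℤ) : Prop :=
  x ≤ y ∧ g (x - 1) < g x ∧ g (y + 1) < g y ∧ ∀ z : ℤ, x ≤ z → z ≤ y → g z = g x

/-- `[x, y]` is a local minimum interval of `g`. -/
def DLocalMin (g : ℤ → ℝ) (x y : ℤ) : Prop :=
  x ≤ y ∧ g x < g (x - 1) ∧ g y < g (y + 1) ∧ ∀ z : ℤ, x ≤ z → z ≤ y → g z = g x

lemma Avg_zero (f : ℤ → ℝ) (n : ℤ) : Avg f n 0 = |f n| := by
  simp [Avg]

lemma f_bound (f : ℤ → ℝ) (hs : Summable fun n : ℤ => |f (n + 1) - f n|) (n : ℤ) :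
    |f n| ≤ |f 0| + ∑' m : ℤ, |f (m + 1) - f m| := by
  have key : ∀ (a : ℤ) (k : ℕ), |f (a + k) - f a| ≤
      ∑ m ∈ Finset.Ico a (a + (k : ℤ)), |f (m + 1) - f m| := by
    intro a k
    induction k with
    | zero => simp
    | succ k ih =>
      have hsplit : Finset.Ico a (a + ((k : ℤ) + 1)) =
          insert (a + (k : ℤ)) (Finset.Ico a (a + (k : ℤ))) := by
        ext x
        simp only [Finset.mem_Ico, Finset.mem_insert]
        omega
      push_cast
      rw [hsplit, Finset.sum_insert (by simp)]
      have htri : |f (a + ((k : ℤ) + 1)) - f a| ≤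
          |f (a + (k : ℤ) + 1) - f (a + (k : ℤ))| + |f (a + (k : ℤ)) - f a| := by
        have he : a + ((k : ℤ) + 1) = a + (k : ℤ) + 1 := by ring
        rw [he]
        exact abs_sub_le _ _ _
      linarith
  have hts : ∀ (s : Finset ℤ), ∑ m ∈ s, |f (m + 1) - f m| ≤ ∑' m : ℤ, |f (m + 1) - f m| :=
    fun s => Summable.sum_le_tsum s (fun m _ => abs_nonneg _) hs
  rcases le_or_gt 0 n with hn | hn
  · have h1 := key 0 n.toNat
    rw [Int.toNat_of_nonneg hn] at h1
    have he : (0 : ℤ) + n = n := by ring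
    rw [he] at h1
    have h2 := hts (Finset.Ico 0 n)
    have h3 := abs_sub_abs_le_abs_sub (f n) (f 0)
    linarith
  · have h1 := key n (-n).toNat
    rw [Int.toNat_of_nonneg (by omega : (0:ℤ) ≤ -n)] at h1
    have he : n + -n = 0 := by ring
    rw [he] at h1
    have h2 := hts (Finset.Ico n 0)
    have h3 : |f n| - |f 0| ≤ |f 0 - f n| := by
      have := abs_sub_abs_le_abs_sub (f n) (f 0)
      rw [abs_sub_comm] at this
      linarith
    linarith

lemma Avg_le_bound (f : ℤ → ℝ) (hs : Summable fun n : ℤ => |f (n + 1) - f n|)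
    (n : ℤ) (r : ℕ) : Avg f n r ≤ |f 0| + ∑' m : ℤ, |f (m + 1) - f m| := by
  set C := |f 0| + ∑' m : ℤ, |f (m + 1) - f m| with hC
  have hC0 : 0 ≤ C := add_nonneg (abs_nonneg _) (tsum_nonneg fun _ => abs_nonneg _)
  have hcard : ((Finset.Icc (-(r : ℤ)) (r : ℤ)).card : ℝ) = 2 * (r : ℝ) + 1 := by
    rw [Int.card_Icc]
    have h : ((r : ℤ) + 1 - (-(r : ℤ))).toNat = 2 * r + 1 := by omega
    rw [h]; push_cast; ring
  have hsum : ∑ k ∈ Finset.Icc (-(r : ℤ)) (r : ℤ), |f (n + k)| ≤ (2 * (r : ℝ) + 1) * C := by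
    calc ∑ k ∈ Finset.Icc (-(r : ℤ)) (r : ℤ), |f (n + k)|
        ≤ (Finset.Icc (-(r : ℤ)) (r : ℤ)).card • C :=
          Finset.sum_le_card_nsmul _ _ _ (fun k _ => f_bound f hs (n + k))
      _ = (2 * (r : ℝ) + 1) * C := by rw [nsmul_eq_mul, hcard]
  have hpos : (0 : ℝ) < 2 * (r : ℝ) + 1 := by positivity
  rw [Avg, inv_mul_le_iff₀ hpos]
  exact hsum

lemma Avg_le_MD (f : ℤ → ℝ) (hs : Summable fun n : ℤ => |f (n + 1) - f n|)
    (n : ℤ) (r : ℕ) : Avg f n r ≤ MD f n :=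
  le_ciSup ⟨|f 0| + ∑' m : ℤ, |f (m + 1) - f m|,
    by rintro x ⟨r', rfl⟩; exact Avg_le_bound f hs n r'⟩ r

lemma abs_le_MD (f : ℤ → ℝ) (hs : Summable fun n : ℤ => |f (n + 1) - f n|)
    (n : ℤ) : |f n| ≤ MD f n := by
  rw [← Avg_zero f n]; exact Avg_le_MD f hs n 0

lemma sum_split_two (g : ℤ → ℝ) (a b : ℤ) (h : a + 1 ≤ b) :
    ∑ k ∈ Finset.Icc a b, g k = g a + g (a + 1) + ∑ k ∈ Finset.Icc (a + 2) b, g k := by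
  have hset : Finset.Icc a b = insert a (insert (a + 1) (Finset.Icc (a + 2) b)) := by
    ext x
    simp only [Finset.mem_Icc, Finset.mem_insert]
    omega
  rw [hset, Finset.sum_insert (by simp only [Finset.mem_insert, Finset.mem_Icc]; omega),
    Finset.sum_insert (by simp only [Finset.mem_Icc]; omega)]
  ring

theorem statement13
    (f : ℤ → ℝ) (hbv : DBV f)
    (am ap bm bp : ℤ) (r : ℕ)
    (hmax : DLocalMax (MD f) am ap)
    (hne : ∀ a : ℤ, am ≤ a → a ≤ ap → MD f a ≠ |f a|)
    (hmin : DLocalMin (MD f) bm bp)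
    (horder : bp < am)
    (hmono : MonotoneOn (MD f) (Set.Icc bp am))
    (hr : MD f ap = Avg f ap r) :
    ap - (r : ℤ) < bp := by
  obtain ⟨hs, -⟩ := hbv
  by_contra hcon
  push_neg at hcon
  -- hcon : bp ≤ ap - r
  have hr1 : 1 ≤ r := by
    rcases Nat.eq_zero_or_pos r with h0 | h
    · exfalso
      apply hne ap hmax.1 le_rfl
      rw [hr, h0, Avg_zero]
    · exact h
  obtain ⟨s, rfl⟩ : ∃ s : ℕ, r = s + 1 := ⟨r - 1, by omega⟩
  have hconZ : bp ≤ ap - ((s : ℤ) + 1) := by push_cast at hcon ⊢; linarith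
  set g : ℤ → ℝ := fun k => |f (ap + k)| with hg
  set a0 : ℤ := -((s : ℤ) + 1) with ha0
  set S : ℝ := ∑ k ∈ Finset.Icc (-((s + 1 : ℕ) : ℤ)) ((s + 1 : ℕ) : ℤ), g k with hS
  have hMDap : MD f ap = (2 * ((s : ℝ) + 1) + 1)⁻¹ * S := by
    rw [hr, Avg]; push_cast; rfl
  have hIcc : Finset.Icc (-((s + 1 : ℕ) : ℤ)) ((s + 1 : ℕ) : ℤ) = Finset.Icc a0 ((s : ℤ) + 1) := by
    congr 1 <;> push_cast <;> ring
  have hsplit : S = g a0 + g (a0 + 1) + ∑ k ∈ Finset.Icc (a0 + 2) ((s : ℤ) + 1), g k := by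
    rw [hS, hIcc]
    exact sum_split_two g _ _ (by omega)
  set T : ℝ := ∑ k ∈ Finset.Icc (a0 + 2) ((s : ℤ) + 1), g k with hT
  -- the average at ap+1 with radius s
  have havg : Avg f (ap + 1) s = (2 * (s : ℝ) + 1)⁻¹ * T := by
    rw [Avg]
    congr 1
    have hmap : Finset.Icc (-(s : ℤ) + 1) ((s : ℤ) + 1) =
        (Finset.Icc (-(s : ℤ)) (s : ℤ)).map (addRightEmbedding 1) := by
      rw [Finset.map_add_right_Icc]
    have h1 : ∑ k ∈ Finset.Icc (-(s : ℤ)) (s : ℤ), |f (ap + 1 + k)|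
        = ∑ j ∈ Finset.Icc (-(s : ℤ) + 1) ((s : ℤ) + 1), g j := by
      rw [hmap, Finset.sum_map]
      apply Finset.sum_congr rfl
      intro k _
      simp only [addRightEmbedding_apply, hg]
      congr 1
      ring
    rw [h1, hT]
    congr 2
    omega
  have hposS : (0 : ℝ) < 2 * ((s : ℝ) + 1) + 1 := by positivity
  have hposT : (0 : ℝ) < 2 * (s : ℝ) + 1 := by positivity
  have h1 : (2 * (s : ℝ) + 1)⁻¹ * T ≤ MD f (ap + 1) := by
    rw [← havg]; exact Avg_le_MD f hs (ap + 1) s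
  have h2 : MD f (ap + 1) < MD f ap := hmax.2.2.1
  have hTlt : T < (2 * (s : ℝ) + 1) * MD f ap :=
    (inv_mul_lt_iff₀ hposT).mp (lt_of_le_of_lt h1 h2)
  have hSeq : S = (2 * ((s : ℝ) + 1) + 1) * MD f ap := by
    rw [hMDap]
    field_simp
  have hkey : 2 * MD f ap < g a0 + g (a0 + 1) := by
    nlinarith [hsplit, hSeq, hTlt]
  -- one of the two points has |f p| > MD f ap
  have hpoint : ∃ p : ℤ, bp ≤ p ∧ p ≤ ap ∧ MD f ap < |f p| := by
    by_contra hno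
    push_neg at hno
    have b1 : g a0 ≤ MD f ap := hno (ap + a0) (by omega) (by omega)
    have b2 : g (a0 + 1) ≤ MD f ap := hno (ap + (a0 + 1)) (by omega) (by omega)
    linarith
  obtain ⟨p, hpb, hpa, hpA⟩ := hpoint
  have hMDp : MD f ap < MD f p := lt_of_lt_of_le hpA (abs_le_MD f hs p)
  have hMDam : MD f ap = MD f am := hmax.2.2.2 ap hmax.1 le_rfl
  have hle : MD f p ≤ MD f ap := by
    rcases le_or_gt p am with hpam | hpam
    · have h := hmono (Set.mem_Icc.mpr ⟨hpb, hpam⟩) (Set.mem_Icc.mpr ⟨horder.le, le_rfl⟩) hpam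
      rw [hMDam]
      exact h
    · have h := hmax.2.2.2 p hpam.le hpa
      rw [hMDam, h]
  linarith
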